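/- For all p ∈ ℝ², all c > 3^{4/3}/2, all q₂ ∈ ℝ, and ε ∈ {1, -1}, one has p₁q₂ - ε·p₂·3^{-1/3} + (1/2)(p₁²+p₂²) + c > 3^{-2/3} - (1/2)q₂² + 1/√(q₂² + 3^{-2/3}). In other words, on the two vertical lines q₁ = ±3^{-1/3}, the affine function g_{p,c}(q) = p₁q₂ - p₂q₁ + (1/2)(p₁²+p₂²) + c is strictly larger than f(q) = q₁² - (1/2)q₂² + 1/√(q₁²+q₂²). -/

import Mathlib

/-!
Write `a = 3^{-1/3}`. Completing the squares in `p₁` and `p₂` bounds the affine side below by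
`c - q₂²/2 - a²/2`, and `√(q₂² + a²) ≥ a` bounds the other side above by `a² - q₂²/2 + 1/a`.
The claim thus reduces to `3a²/2 + 1/a < c`, and `3a²/2 + 1/a = 3/(2a) = 3^{4/3}/2` since `3a³ = 1`.
-/

lemma neg_half_sq_sub_half_sq_le (x y q b : ℝ) :
    -(1/2) * q ^ 2 - (1/2) * b ^ 2 ≤ x * q - y * b + (1/2) * (x ^ 2 + y ^ 2) := by
  nlinarith [sq_nonneg (x + q), sq_nonneg (y - b)]

lemma one_div_sqrt_sq_add_sq_le {a : ℝ} (ha : 0 < a) (q : ℝ) :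
    1 / Real.sqrt (q ^ 2 + a ^ 2) ≤ a⁻¹ := by
  have h : a ≤ Real.sqrt (q ^ 2 + a ^ 2) :=
    Real.le_sqrt_of_sq_le (le_add_of_nonneg_left (sq_nonneg q))
  simpa only [one_div] using inv_anti₀ ha h

lemma affine_gt_on_vertical_line (p : ℝ × ℝ) {a c : ℝ} (ha : 0 < a)
    (hc : 3/2 * a ^ 2 + a⁻¹ < c) (q : ℝ) {ε : ℝ} (hε : ε ^ 2 = 1) :
    a ^ 2 - (1/2) * q ^ 2 + 1 / Real.sqrt (q ^ 2 + a ^ 2)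
      < p.1 * q - ε * p.2 * a + (1/2) * (p.1 ^ 2 + p.2 ^ 2) + c := by
  have hsq := neg_half_sq_sub_half_sq_le p.1 p.2 q (ε * a)
  have hεa : (ε * a) ^ 2 = a ^ 2 := by rw [mul_pow, hε, one_mul]
  have hsqrt := one_div_sqrt_sq_add_sq_le ha q
  rw [hεa] at hsq
  linarith

lemma three_rpow_neg_one_third_sq : ((3:ℝ) ^ (-(1:ℝ)/3)) ^ 2 = (3:ℝ) ^ (-(2:ℝ)/3) := by
  rw [← Real.rpow_natCast, ← Real.rpow_mul (by norm_num)]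
  norm_num

lemma three_half_sq_add_inv_three_rpow_neg_one_third :
    3/2 * ((3:ℝ) ^ (-(1:ℝ)/3)) ^ 2 + ((3:ℝ) ^ (-(1:ℝ)/3))⁻¹ = (3:ℝ) ^ ((4:ℝ)/3) / 2 := by
  set t : ℝ := (3:ℝ) ^ ((1:ℝ)/3)
  have ht : 0 < t := by positivity
  have ht3 : t ^ 3 = 3 := by
    rw [← Real.rpow_natCast, ← Real.rpow_mul (by norm_num)]
    norm_num
  have hinv : (3:ℝ) ^ (-(1:ℝ)/3) = t⁻¹ := by
    rw [neg_div, Real.rpow_neg (by norm_num)]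
  have h43 : (3:ℝ) ^ ((4:ℝ)/3) = 3 * t := by
    rw [show (4:ℝ)/3 = 1 + 1/3 by norm_num, Real.rpow_add (by norm_num), Real.rpow_one]
  rw [hinv, h43, inv_inv]
  field_simp
  linear_combination -ht3

theorem g_dominates_f_on_vertical_lines (p : ℝ × ℝ) (c : ℝ)
    (hc : (3:ℝ) ^ ((4:ℝ)/3) / 2 < c) (q₂ : ℝ) (ε : ℝ) (hε : ε = 1 ∨ ε = -1) :
    (3:ℝ) ^ (-(2:ℝ)/3) - (1/2) * q₂ ^ 2 + 1 / Real.sqrt (q₂ ^ 2 + (3:ℝ) ^ (-(2:ℝ)/3))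
      < p.1 * q₂ - ε * p.2 * (3:ℝ) ^ (-(1:ℝ)/3) + (1/2) * (p.1 ^ 2 + p.2 ^ 2) + c := by
  have hε2 : ε ^ 2 = 1 := by rcases hε with rfl | rfl <;> norm_num
  rw [← three_half_sq_add_inv_three_rpow_neg_one_third] at hc
  simpa only [three_rpow_neg_one_third_sq] using
    affine_gt_on_vertical_line p (by positivity) hc q₂ hε2
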